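/- Let A = (A₁, …, A_d) be a d-tuple of n×n complex matrices. Then A is Toeplitz-contractive if and only if there exist ℓ ∈ ℕ, complex numbers λ₁, …, λ_ℓ of modulus 1, and positive semidefinite matrices Q₁, …, Q_ℓ ∈ M_n(ℂ) such that Σ_{j=1}^ℓ Q_j = 1_n and A_k = Σ_{j=1}^ℓ λ_j^k Q_j for all k = 1, …, d. -/

import Mathlib

open scoped ComplexOrder

noncomputable section

/-- The `(d+1) × (d+1)` block Toeplitz matrix (an element of `M_{(d+1)n}(ℂ)`, indexed by
`Fin (d+1) × Fin n`) associated to a `d`-tuple `A` of `n × n` complex matrices: its `(i, j)`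
block is `1ₙ` if `i = j`, `A_{i−j}` if `i > j`, and `(A_{j−i})*` if `i < j`. -/
def matToeplitz {d n : ℕ} (A : Fin d → Matrix (Fin n) (Fin n) ℂ) :
    Matrix (Fin (d + 1) × Fin n) (Fin (d + 1) × Fin n) ℂ :=
  Matrix.of fun p q =>
    if _h1 : (p.1 : ℕ) = (q.1 : ℕ) then (1 : Matrix (Fin n) (Fin n) ℂ) p.2 q.2
    else if _h2 : (q.1 : ℕ) < (p.1 : ℕ) then
      A ⟨(p.1 : ℕ) - (q.1 : ℕ) - 1, by have := p.1.isLt; omega⟩ p.2 q.2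
    else
      (A ⟨(q.1 : ℕ) - (p.1 : ℕ) - 1, by have := q.1.isLt; omega⟩).conjTranspose p.2 q.2

/-- A `d`-tuple of `n × n` complex matrices is Toeplitz-contractive if its block Toeplitz
matrix is positive semidefinite. -/
def MatToeplitzContractive {d n : ℕ} (A : Fin d → Matrix (Fin n) (Fin n) ℂ) : Prop :=
  (matToeplitz A).PosSemidef

open Matrix Complex

lemma cayley_inj : Function.Injective (fun t : ℝ => (1 - t*I)⁻¹ * (1 + t*I)) := by
  intro t s h
  have ht : (1 - (t:ℂ)*I) ≠ 0 := by
    intro hc; have := congrArg Complex.re hc; simp at this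
  have hs : (1 - (s:ℂ)*I) ≠ 0 := by
    intro hc; have := congrArg Complex.re hc; simp at this
  field_simp at h
  have hs' : (1 - I * (s:ℂ)) ≠ 0 := by rwa [mul_comm]
  rw [eq_div_iff hs'] at h
  have h2 : (t:ℂ) = (s:ℂ) := by linear_combination h * (-I) / 2 + ((t:ℂ) - s) * Complex.I_sq
  exact_mod_cast h2

lemma cayley_norm (t : ℝ) : ‖(1 - (t:ℂ)*I)⁻¹ * (1 + t*I)‖ = 1 := by
  have h1 : (1 - (t:ℂ)*I) = starRingEnd ℂ (1 + t*I) := by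
    rw [map_add, _root_.map_one, _root_.map_mul, Complex.conj_ofReal, Complex.conj_I]; ring
  have hne : (1 + (t:ℂ)*I) ≠ 0 := by
    intro hc; have := congrArg Complex.re hc; simp at this
  rw [norm_mul, norm_inv, h1, RCLike.norm_conj, inv_mul_cancel₀ (norm_ne_zero_iff.mpr hne)]

lemma exists_unimodular_unit {ι : Type*} [Fintype ι] [DecidableEq ι]
    (U : Matrix ι ι ℂ) : ∃ μ : ℂ, ‖μ‖ = 1 ∧ IsUnit (μ • (1 : Matrix ι ι ℂ) + U) := by
  have hfin : ((fun z : ℂ => -z) '' (spectrum ℂ U)).Finite :=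
    (Matrix.finite_spectrum U).image _
  have hinf : (Set.range (fun t : ℝ => (1 - t*I)⁻¹ * (1 + t*I))).Infinite :=
    Set.infinite_range_of_injective cayley_inj
  obtain ⟨z, hz⟩ := (hinf.diff hfin).nonempty
  obtain ⟨⟨t, rfl⟩, hznot⟩ := hz
  set z := (1 - (t:ℂ)*I)⁻¹ * (1 + t*I) with hzdef
  refine ⟨z, cayley_norm t, ?_⟩
  have hns : -z ∉ spectrum ℂ U := by
    intro hc
    exact hznot ⟨-z, hc, by simp [hzdef]⟩
  rw [spectrum.notMem_iff] at hns
  have : algebraMap ℂ (Matrix ι ι ℂ) (-z) - U = -(z • 1 + U) := by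
    rw [Algebra.algebraMap_eq_smul_one, neg_smul]; abel
  rw [this, IsUnit.neg_iff] at hns
  exact hns

lemma unitary_diag {ι : Type*} [Fintype ι] [DecidableEq ι]
    (U : Matrix ι ι ℂ) (hU : Uᴴ * U = 1) :
    ∃ (P : Matrix ι ι ℂ) (lam : ι → ℂ), Pᴴ * P = 1 ∧ P * Pᴴ = 1 ∧ (∀ j, ‖lam j‖ = 1) ∧
      U = P * Matrix.diagonal lam * Pᴴ := by
  classical
  obtain ⟨μ, hμ, hKunit0⟩ := exists_unimodular_unit U
  have hμμ : star μ * μ = 1 := by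
    rw [Complex.star_def, ← Complex.normSq_eq_conj_mul_self, ← Complex.sq_norm]
    simp [hμ]
  have hμμ' : μ * star μ = 1 := by rw [mul_comm]; exact hμμ
  set W : Matrix ι ι ℂ := star μ • U with hWdef
  have hW : Wᴴ * W = 1 := by
    rw [hWdef, conjTranspose_smul, smul_mul_smul_comm, hU, star_star, hμμ', one_smul]
  have hW' : W * Wᴴ = 1 := mul_eq_one_comm.mp hW
  set K : Matrix ι ι ℂ := 1 + W with hKdef
  have hKunit : IsUnit K := by
    have h1 : ((star μ) • (1 : Matrix ι ι ℂ)) * (μ • 1) = 1 := by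
      rw [smul_mul_smul_comm, one_mul, hμμ, one_smul]
    have h2 : K = ((star μ) • (1 : Matrix ι ι ℂ)) * (μ • (1:Matrix ι ι ℂ) + U) := by
      rw [smul_one_mul, smul_add, smul_smul, hμμ, one_smul, hKdef, hWdef]
    rw [h2]
    have h3 : IsUnit ((star μ) • (1 : Matrix ι ι ℂ)) :=
      (Matrix.isUnit_iff_isUnit_det _).mpr
        (IsUnit.of_mul_eq_one _ (by rw [← Matrix.det_mul, h1, Matrix.det_one]))
    exact h3.mul hKunit0
  have hKK : K * K⁻¹ = 1 := Matrix.mul_nonsing_inv K ((Matrix.isUnit_iff_isUnit_det K).mp hKunit)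
  have hKK' : K⁻¹ * K = 1 := Matrix.nonsing_inv_mul K ((Matrix.isUnit_iff_isUnit_det K).mp hKunit)
  have hWK : W * K = K * W := by rw [hKdef]; noncomm_ring
  have hcomm : W * K⁻¹ = K⁻¹ * W := by
    have h3 : K⁻¹ * (W * K) * K⁻¹ = K⁻¹ * (K * W) * K⁻¹ := by rw [hWK]
    rw [← mul_assoc K⁻¹ W K, mul_assoc (K⁻¹ * W) K K⁻¹, hKK, mul_one,
      ← mul_assoc K⁻¹ K W, hKK', one_mul] at h3
    exact h3.symm
  have hcomm1 : (1 - W) * K⁻¹ = K⁻¹ * (1 - W) := by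
    rw [sub_mul, mul_sub, one_mul, mul_one, hcomm]
  set H : Matrix ι ι ℂ := Complex.I • ((1 - W) * K⁻¹) with hHdef
  have hWunit : Wᴴ⁻¹ = W := Matrix.inv_eq_right_inv hW
  have hH : H.IsHermitian := by
    rw [Matrix.IsHermitian, hHdef, conjTranspose_smul, conjTranspose_mul,
      Matrix.conjTranspose_nonsing_inv, conjTranspose_sub, conjTranspose_one]
    have hKH : Kᴴ = Wᴴ * K := by
      rw [hKdef, conjTranspose_add, conjTranspose_one, mul_add, mul_one, hW, add_comm]
    have hKHinv : Kᴴ⁻¹ = K⁻¹ * W := by rw [hKH, Matrix.mul_inv_rev, hWunit]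
    have hstep : Kᴴ⁻¹ * (1 - Wᴴ) = -((1 - W) * K⁻¹) := by
      rw [hKHinv, mul_assoc, mul_sub, mul_one, hW', hcomm1]
      rw [← mul_neg, neg_sub]
    rw [hstep, Complex.star_def, Complex.conj_I, neg_smul, smul_neg, neg_neg]
  -- spectral theorem for H
  set V : Matrix ι ι ℂ := (hH.eigenvectorUnitary : Matrix ι ι ℂ) with hVdef
  have hVV : Vᴴ * V = 1 := by
    simpa [hVdef, star_eq_conjTranspose] using
      (Matrix.mem_unitaryGroup_iff'.mp hH.eigenvectorUnitary.2)
  have hVV' : V * Vᴴ = 1 := mul_eq_one_comm.mp hVV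
  set e : ι → ℝ := hH.eigenvalues with hedef
  have hspec : H = V * Matrix.diagonal (fun j => (e j : ℂ)) * Vᴴ := by
    have := hH.spectral_theorem
    rw [Unitary.conjStarAlgAut_apply, ← hVdef, ← hedef] at this
    exact this
  have hent : ∀ j, ((e j : ℂ) + Complex.I) ≠ 0 := by
    intro j hc
    have := congrArg Complex.im hc
    simp at this
  -- key algebraic identity
  have hHK : H * K = Complex.I • (1 - W) := by
    rw [hHdef, smul_mul_assoc, mul_assoc, hKK', mul_one]
  have key : (H + Complex.I • 1) * W = Complex.I • (1:Matrix ι ι ℂ) - H := by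
    have h4 : H * W = Complex.I • (1:Matrix ι ι ℂ) - Complex.I • W - H := by
      have : H * K = H + H * W := by rw [hKdef, mul_add, mul_one]
      rw [this] at hHK
      have := hHK
      rw [smul_sub] at this
      linear_combination (norm := noncomm_ring) this
    rw [add_mul, h4, smul_mul_assoc, one_mul]
    noncomm_ring
  -- rewrite both sides via V
  set ν : ι → ℂ := fun j => ((e j : ℂ) + Complex.I)⁻¹ * (Complex.I - e j) with hνdef
  have hD1 : H + Complex.I • 1 = V * Matrix.diagonal (fun j => (e j : ℂ) + Complex.I) * Vᴴ := by
    have h5 : (Complex.I • (1:Matrix ι ι ℂ)) = V * (Complex.I • (1:Matrix ι ι ℂ)) * Vᴴ := by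
      rw [mul_smul_comm, mul_one, smul_mul_assoc, hVV']
    rw [hspec]
    nth_rewrite 1 [h5]
    rw [← add_mul, ← mul_add]
    congr 1
    congr 1
    rw [smul_one_eq_diagonal, Matrix.diagonal_add]
  have hD2 : Complex.I • (1:Matrix ι ι ℂ) - H = V * Matrix.diagonal (fun j => Complex.I - (e j : ℂ)) * Vᴴ := by
    have h5 : (Complex.I • (1:Matrix ι ι ℂ)) = V * (Complex.I • (1:Matrix ι ι ℂ)) * Vᴴ := by
      rw [mul_smul_comm, mul_one, smul_mul_assoc, hVV']
    rw [hspec]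
    nth_rewrite 1 [h5]
    rw [← sub_mul, ← mul_sub]
    congr 1
    congr 1
    rw [smul_one_eq_diagonal, Matrix.diagonal_sub]
  have hPDunit : IsUnit (H + Complex.I • (1:Matrix ι ι ℂ)) := by
    rw [hD1]
    refine (IsUnit.mul (IsUnit.mul ?_ ?_) ?_)
    · exact (Matrix.isUnit_iff_isUnit_det V).mpr
        (IsUnit.of_mul_eq_one _ (by rw [← Matrix.det_mul, hVV', Matrix.det_one]))
    · rw [Matrix.isUnit_iff_isUnit_det, Matrix.det_diagonal]
      exact (Finset.prod_ne_zero_iff.mpr (fun j _ => hent j)).isUnit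
    · exact (Matrix.isUnit_iff_isUnit_det Vᴴ).mpr
        (IsUnit.of_mul_eq_one _ (by rw [← Matrix.det_mul, hVV, Matrix.det_one]))
  have hconjmul : ∀ D1 D2 : Matrix ι ι ℂ, (V * D1 * Vᴴ) * (V * D2 * Vᴴ) = V * (D1 * D2) * Vᴴ := by
    intro D1 D2
    simp only [mul_assoc]
    rw [show Vᴴ * (V * (D2 * Vᴴ)) = D2 * Vᴴ by rw [← mul_assoc, hVV, one_mul]]
  have hWform : W = V * Matrix.diagonal ν * Vᴴ := by
    refine hPDunit.mul_left_cancel ?_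
    rw [key, hD1, hD2, hconjmul, Matrix.diagonal_mul_diagonal]
    have hfun : (fun j => Complex.I - ((e j : ℝ) : ℂ)) = fun i => (((e i : ℝ):ℂ) + Complex.I) * ν i := by
      funext j
      rw [hνdef]
      rw [← mul_assoc, mul_inv_cancel₀ (hent j), one_mul]
    rw [hfun]
  refine ⟨V, fun j => μ * ν j, hVV, hVV', ?_, ?_⟩
  · intro j
    rw [hνdef, norm_mul, hμ, one_mul, norm_mul, norm_inv]
    have : Complex.I - (e j : ℂ) = -(starRingEnd ℂ ((e j : ℂ) + Complex.I)) := by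
      rw [map_add, Complex.conj_ofReal, Complex.conj_I]; ring
    rw [this, norm_neg, RCLike.norm_conj, inv_mul_cancel₀ (norm_ne_zero_iff.mpr (hent j))]
  · have hUW : U = μ • W := by rw [hWdef, smul_smul, hμμ', one_smul]
    rw [hUW, hWform, ← smul_mul_assoc, ← mul_smul_comm, ← Matrix.diagonal_smul]
    congr 2
local notation "⟪" x ", " y "⟫" => inner (𝕜 := ℂ) x y

lemma inner_eu {ι : Type*} [Fintype ι] (x y : EuclideanSpace ℂ ι) :
    ⟪x, y⟫ = ∑ r, (starRingEnd ℂ) (x r) * y r := by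
  simp [PiLp.inner_apply, RCLike.inner_apply]
  exact Finset.sum_congr rfl fun _ _ => mul_comm _ _

lemma exists_unitary_mul_eq {ι κ : Type*} [Fintype ι] [Fintype κ] [DecidableEq ι] [DecidableEq κ]
    (f : κ → ι) (hf : Function.Injective f)
    (X Y : Matrix ι κ ℂ) (h : Xᴴ * X = Yᴴ * Y) :
    ∃ U : Matrix ι ι ℂ, Uᴴ * U = 1 ∧ U * X = Y := by
  classical
  have hG : (Xᴴ * X).PosSemidef := Matrix.posSemidef_conjTranspose_mul_self X
  have hGH : (Xᴴ * X).IsHermitian := hG.1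
  set e : κ → ℝ := hGH.eigenvalues with hedef
  have he0 : ∀ i, 0 ≤ e i := hG.eigenvalues_nonneg
  set V : Matrix κ κ ℂ := (hGH.eigenvectorUnitary : Matrix κ κ ℂ) with hVdef
  have hVV : Vᴴ * V = 1 := by
    simpa [hVdef, star_eq_conjTranspose] using
      (Matrix.mem_unitaryGroup_iff'.mp hGH.eigenvectorUnitary.2)
  have hVV' : V * Vᴴ = 1 := mul_eq_one_comm.mp hVV
  have hspec : Xᴴ * X = V * Matrix.diagonal (fun j => (e j : ℂ)) * Vᴴ := by
    have := hGH.spectral_theorem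
    rw [Unitary.conjStarAlgAut_apply, ← hVdef, ← hedef] at this
    exact this
  set X' : Matrix ι κ ℂ := X * V with hX'def
  set Y' : Matrix ι κ ℂ := Y * V with hY'def
  have hdiag : ∀ (Z : Matrix ι κ ℂ), Zᴴ * Z = Xᴴ * X →
      (Z * V)ᴴ * (Z * V) = Matrix.diagonal (fun j => (e j : ℂ)) := by
    intro Z hZ
    have h1 : (Z * V)ᴴ * (Z * V) = Vᴴ * (Zᴴ * Z) * V := by
      rw [conjTranspose_mul]; simp only [Matrix.mul_assoc]
    rw [h1, hZ, hspec,
      show Vᴴ * ((V * Matrix.diagonal (fun j => ((e j : ℝ) : ℂ))) * Vᴴ) * V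
        = (Vᴴ * V) * (Matrix.diagonal (fun j => ((e j : ℝ) : ℂ)) * (Vᴴ * V)) from by
          simp only [Matrix.mul_assoc],
      hVV, Matrix.one_mul, Matrix.mul_one]
  have hdiagX : X'ᴴ * X' = Matrix.diagonal (fun j => (e j : ℂ)) := hdiag X rfl
  have hdiagY : Y'ᴴ * Y' = Matrix.diagonal (fun j => (e j : ℂ)) := hdiag Y h.symm
  -- zero columns
  have hzero : ∀ (Z : Matrix ι κ ℂ), Zᴴ * Z = Matrix.diagonal (fun j => (e j : ℂ)) →
      ∀ i, e i = 0 → ∀ r, Z r i = 0 := by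
    intro Z hZ i hi r
    have h1 : ∑ t, Complex.normSq (Z t i) = 0 := by
      have h2 : (Zᴴ * Z) i i = 0 := by rw [hZ, Matrix.diagonal_apply_eq, hi]; simp
      rw [Matrix.mul_apply] at h2
      have h3 : ∀ t, (Zᴴ : Matrix κ ι ℂ) i t * Z t i = (Complex.normSq (Z t i) : ℂ) := by
        intro t
        rw [Matrix.conjTranspose_apply, Complex.star_def, Complex.normSq_eq_conj_mul_self]
      rw [Finset.sum_congr rfl (fun t _ => h3 t)] at h2
      exact_mod_cast (by exact_mod_cast h2 : ((∑ t, Complex.normSq (Z t i) : ℝ) : ℂ) = 0)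
    have := (Finset.sum_eq_zero_iff_of_nonneg (fun t _ => Complex.normSq_nonneg (Z t i))).mp h1
    have h4 := this r (Finset.mem_univ r)
    exact Complex.normSq_eq_zero.mp h4
  -- orthonormal column families
  set s : Set κ := {i | e i ≠ 0} with hsdef
  have hip : ∀ (Z : Matrix ι κ ℂ), Zᴴ * Z = Matrix.diagonal (fun j => (e j : ℂ)) →
      ∀ i j : κ, i ∈ s → j ∈ s →
      ⟪((WithLp.equiv 2 (ι → ℂ)).symm fun r => ((Real.sqrt (e i) : ℝ) : ℂ)⁻¹ * Z r i),
       ((WithLp.equiv 2 (ι → ℂ)).symm fun r => ((Real.sqrt (e j) : ℝ) : ℂ)⁻¹ * Z r j)⟫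
        = if i = j then 1 else 0 := by
    intro Z hZ i j hi hj
    rw [inner_eu]
    simp only [WithLp.equiv_symm_apply, PiLp.toLp_apply]
    have hsum : ∑ r, (starRingEnd ℂ) (((Real.sqrt (e i) : ℝ) : ℂ)⁻¹ * Z r i)
        * (((Real.sqrt (e j) : ℝ) : ℂ)⁻¹ * Z r j)
        = (starRingEnd ℂ) ((Real.sqrt (e i) : ℂ))⁻¹ * ((Real.sqrt (e j) : ℂ))⁻¹
          * ((Zᴴ * Z) i j) := by
      rw [Matrix.mul_apply, Finset.mul_sum]
      refine Finset.sum_congr rfl (fun r _ => ?_)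
      rw [_root_.map_mul, Matrix.conjTranspose_apply, Complex.star_def]
      ring
    rw [hsum, hZ]
    by_cases hij : i = j
    · subst hij
      rw [Matrix.diagonal_apply_eq, if_pos rfl]
      have hei : e i ≠ 0 := hi
      have h5 : ((Real.sqrt (e i))⁻¹ * (Real.sqrt (e i))⁻¹ * e i : ℝ) = 1 := by
        rw [← mul_inv, Real.mul_self_sqrt (he0 i), inv_mul_cancel₀ hei]
      simp only [map_inv₀, Complex.conj_ofReal]
      norm_cast
    · rw [Matrix.diagonal_apply_ne _ hij, if_neg hij, mul_zero]
  -- families of (candidate) orthonormal columns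
  set xv : κ → EuclideanSpace ℂ ι := fun i =>
    (WithLp.equiv 2 (ι → ℂ)).symm fun r => ((Real.sqrt (e i) : ℝ) : ℂ)⁻¹ * X' r i with hxvdef
  set yv : κ → EuclideanSpace ℂ ι := fun i =>
    (WithLp.equiv 2 (ι → ℂ)).symm fun r => ((Real.sqrt (e i) : ℝ) : ℂ)⁻¹ * Y' r i with hyvdef
  set sι : Set ι := f '' s with hsιdef
  have horth : ∀ (zv : κ → EuclideanSpace ℂ ι),
      (∀ i j : κ, i ∈ s → j ∈ s → ⟪zv i, zv j⟫ = if i = j then 1 else 0) →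
      Orthonormal ℂ (sι.restrict (Function.extend f zv 0)) := by
    intro zv hzv
    rw [orthonormal_iff_ite]
    rintro ⟨r, hr⟩ ⟨r', hr'⟩
    obtain ⟨i, hi, rfl⟩ := hr
    obtain ⟨j, hj, rfl⟩ := hr'
    show ⟪Function.extend f zv 0 (f i), Function.extend f zv 0 (f j)⟫ = _
    rw [hf.extend_apply, hf.extend_apply, hzv i j hi hj]
    by_cases hij : i = j
    · subst hij
      rw [if_pos rfl, if_pos rfl]
    · rw [if_neg hij, if_neg (fun hc => hij (hf (congrArg Subtype.val hc)))]
  have horthx := horth xv (fun i j hi hj => hip X' hdiagX i j hi hj)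
  have horthy := horth yv (fun i j hi hj => hip Y' hdiagY i j hi hj)
  have hcard : Module.finrank ℂ (EuclideanSpace ℂ ι) = Fintype.card ι :=
    finrank_euclideanSpace
  obtain ⟨b, hb⟩ := horthx.exists_orthonormalBasis_extension_of_card_eq hcard
  obtain ⟨c, hc⟩ := horthy.exists_orthonormalBasis_extension_of_card_eq hcard
  set Bm : Matrix ι ι ℂ := Matrix.of fun r j => b j r with hBmdef
  set Cm : Matrix ι ι ℂ := Matrix.of fun r j => c j r with hCmdef
  have hgram : ∀ (d : OrthonormalBasis ι ℂ (EuclideanSpace ℂ ι)) (Dm : Matrix ι ι ℂ),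
      Dm = Matrix.of (fun r j => d j r) → Dmᴴ * Dm = 1 := by
    intro d Dm hDm
    ext j j'
    have h1 : (Dmᴴ * Dm) j j' = ⟪d j, d j'⟫ := by
      rw [Matrix.mul_apply, inner_eu]
      refine Finset.sum_congr rfl (fun r _ => ?_)
      rw [Matrix.conjTranspose_apply, hDm]
      rfl
    rw [h1, orthonormal_iff_ite.mp d.orthonormal, Matrix.one_apply]
  have hBm : Bmᴴ * Bm = 1 := hgram b Bm rfl
  have hCm : Cmᴴ * Cm = 1 := hgram c Cm rfl
  have hBm' : Bm * Bmᴴ = 1 := mul_eq_one_comm.mp hBm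
  set U : Matrix ι ι ℂ := Cm * Bmᴴ with hUdef
  have hU1 : Uᴴ * U = 1 := by
    rw [hUdef, conjTranspose_mul, conjTranspose_conjTranspose, Matrix.mul_assoc,
      ← Matrix.mul_assoc Cmᴴ, hCm, Matrix.one_mul, hBm']
  have hUBm : U * Bm = Cm := by
    rw [hUdef, Matrix.mul_assoc, hBm, Matrix.mul_one]
  have hmain : U * X' = Y' := by
    ext r i
    by_cases hi : e i = 0
    · rw [Matrix.mul_apply]
      have hx := hzero X' hdiagX i hi
      have hy := hzero Y' hdiagY i hi
      rw [hy]
      refine Finset.sum_eq_zero (fun t _ => ?_)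
      rw [hx t, mul_zero]
    · have hsqrt : Real.sqrt (e i) ≠ 0 :=
        Real.sqrt_ne_zero'.mpr (lt_of_le_of_ne (he0 i) (Ne.symm hi))
      have hsqrtC : ((Real.sqrt (e i) : ℝ) : ℂ) ≠ 0 := Complex.ofReal_ne_zero.mpr hsqrt
      have hbfi : b (f i) = xv i := by
        rw [hb (f i) ⟨i, hi, rfl⟩, hf.extend_apply]
      have hcfi : c (f i) = yv i := by
        rw [hc (f i) ⟨i, hi, rfl⟩, hf.extend_apply]
      have hXcol : ∀ t, X' t i = ((Real.sqrt (e i) : ℝ) : ℂ) * (b (f i)) t := by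
        intro t
        rw [hbfi, hxvdef]
        simp only [WithLp.equiv_symm_apply, PiLp.toLp_apply]
        rw [← mul_assoc, mul_inv_cancel₀ hsqrtC, one_mul]
      have hYcol : ∀ t, Y' t i = ((Real.sqrt (e i) : ℝ) : ℂ) * (c (f i)) t := by
        intro t
        rw [hcfi, hyvdef]
        simp only [WithLp.equiv_symm_apply, PiLp.toLp_apply]
        rw [← mul_assoc, mul_inv_cancel₀ hsqrtC, one_mul]
      rw [Matrix.mul_apply, hYcol r]
      calc ∑ t, U r t * X' t i
          = ∑ t, ((Real.sqrt (e i) : ℝ) : ℂ) * (U r t * Bm t (f i)) := by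
            refine Finset.sum_congr rfl (fun t _ => ?_)
            rw [hXcol t]
            rw [hBmdef]
            simp only [Matrix.of_apply]
            ring
        _ = ((Real.sqrt (e i) : ℝ) : ℂ) * (U * Bm) r (f i) := by
            rw [← Finset.mul_sum, Matrix.mul_apply]
        _ = ((Real.sqrt (e i) : ℝ) : ℂ) * (c (f i)) r := by rw [hUBm, hCmdef]; rfl
  refine ⟨U, hU1, ?_⟩
  have h6 : U * (X * V) * Vᴴ = Y * V * Vᴴ := by rw [← hX'def, ← hY'def, hmain]
  rw [Matrix.mul_assoc U, Matrix.mul_assoc X, Matrix.mul_assoc Y, hVV', Matrix.mul_one,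
    Matrix.mul_one] at h6
  exact h6
lemma matToeplitz_diag {d n : ℕ} (A : Fin d → Matrix (Fin n) (Fin n) ℂ)
    (p : Fin (d+1)) (s t : Fin n) :
    matToeplitz A (p, s) (p, t) = (1 : Matrix (Fin n) (Fin n) ℂ) s t := by
  simp [matToeplitz]

lemma matToeplitz_lower {d n : ℕ} (A : Fin d → Matrix (Fin n) (Fin n) ℂ)
    (k : Fin d) (s t : Fin n) :
    matToeplitz A (k.succ, s) ((0 : Fin (d+1)), t) = A k s t := by
  have h1 : ¬ ((k.succ : Fin (d+1)) : ℕ) = ((0 : Fin (d+1)) : ℕ) := by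
    simp [Fin.val_succ]
  have h2 : (((0 : Fin (d+1))) : ℕ) < ((k.succ : Fin (d+1)) : ℕ) := by
    simp [Fin.val_succ]
  simp only [matToeplitz, Matrix.of_apply]
  rw [dif_neg h1, dif_pos h2]
  have h3 : (⟨((k.succ : Fin (d+1)) : ℕ) - (((0:Fin (d+1))) : ℕ) - 1, by
      have := (k.succ : Fin (d+1)).isLt; omega⟩ : Fin d) = k := by
    ext
    simp [Fin.val_succ]
  rw [h3]

lemma matToeplitz_shift {d n : ℕ} (A : Fin d → Matrix (Fin n) (Fin n) ℂ)
    (k k' : Fin d) (s t : Fin n) :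
    matToeplitz A (k.castSucc, s) (k'.castSucc, t) = matToeplitz A (k.succ, s) (k'.succ, t) := by
  simp only [matToeplitz, Matrix.of_apply, Fin.coe_castSucc, Fin.val_succ]
  by_cases h1 : (k : ℕ) = (k' : ℕ)
  · rw [dif_pos h1, dif_pos (show (k:ℕ) + 1 = (k':ℕ) + 1 by omega)]
  · rw [dif_neg h1, dif_neg (show ¬ ((k:ℕ) + 1 = (k':ℕ) + 1) by omega)]
    by_cases h2 : (k' : ℕ) < (k : ℕ)
    · rw [dif_pos h2, dif_pos (show (k':ℕ) + 1 < (k:ℕ) + 1 by omega)]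
      have h3 : (⟨(k:ℕ) - (k':ℕ) - 1, by omega⟩ : Fin d)
          = (⟨(k:ℕ) + 1 - ((k':ℕ) + 1) - 1, by omega⟩ : Fin d) := by
        ext; simp only; omega
      rw [h3]
    · rw [dif_neg h2, dif_neg (show ¬ ((k':ℕ) + 1 < (k:ℕ) + 1) by omega)]
      have h3 : (⟨(k':ℕ) - (k:ℕ) - 1, by omega⟩ : Fin d)
          = (⟨(k':ℕ) + 1 - ((k:ℕ) + 1) - 1, by omega⟩ : Fin d) := by
        ext; simp only; omega
      rw [h3]

open scoped MatrixOrder Matrix.Norms.L2Operator in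
lemma psd_eq_ct_mul_self_aux {m : Type*} [Fintype m] [DecidableEq m] {M : Matrix m m ℂ}
    (h : M.PosSemidef) : ∃ B : Matrix m m ℂ, M = Bᴴ * B := by
  obtain ⟨B, hB⟩ := CStarAlgebra.nonneg_iff_eq_star_mul_self.mp h.nonneg
  exact ⟨B, hB⟩

/-- a `d`-tuple `A` of `n × n` complex matrices is Toeplitz-contractive if and
only if there exist `ℓ ∈ ℕ`, unimodular `λ₁, …, λ_ℓ ∈ ℂ`, and positive semidefinite matrices
`Q₁, …, Q_ℓ` with `∑ⱼ Qⱼ = 1ₙ` and `A_k = ∑ⱼ λⱼ^k Qⱼ` for all `k = 1, …, d`. -/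
theorem matToeplitzContractive_iff_unimodular_decomposition
    {d n : ℕ} (A : Fin d → Matrix (Fin n) (Fin n) ℂ) :
    MatToeplitzContractive A ↔
      ∃ (ℓ : ℕ) (lam : Fin ℓ → ℂ) (Q : Fin ℓ → Matrix (Fin n) (Fin n) ℂ),
        (∀ j, ‖lam j‖ = 1) ∧ (∀ j, (Q j).PosSemidef) ∧
        (∑ j, Q j = 1) ∧
        (∀ k : Fin d, A k = ∑ j, lam j ^ ((k : ℕ) + 1) • Q j) := by
  classical
  constructor
  · -- hard direction
    intro hA
    obtain ⟨B, hT⟩ := psd_eq_ct_mul_self_aux hA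
    set Bc : Fin (d+1) → Matrix (Fin (d+1) × Fin n) (Fin n) ℂ :=
      fun p => Matrix.of fun r t => B r (p, t) with hBcdef
    have hBcmul : ∀ p q (s t : Fin n),
        ((Bc p)ᴴ * Bc q) s t = matToeplitz A (p, s) (q, t) := by
      intro p q s t
      rw [hT, Matrix.mul_apply, Matrix.mul_apply]
      rfl
    set f : Fin d × Fin n → Fin (d+1) × Fin n := fun ki => (ki.1.castSucc, ki.2) with hfdef
    have hf : Function.Injective f := by
      intro x y hxy
      simp only [hfdef, Prod.mk.injEq] at hxy
      exact Prod.ext (Fin.castSucc_injective d hxy.1) hxy.2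
    set X : Matrix (Fin (d+1) × Fin n) (Fin d × Fin n) ℂ :=
      Matrix.of fun r ki => B r (ki.1.castSucc, ki.2) with hXdef
    set Y : Matrix (Fin (d+1) × Fin n) (Fin d × Fin n) ℂ :=
      Matrix.of fun r ki => B r (ki.1.succ, ki.2) with hYdef
    have hXYgram : Xᴴ * X = Yᴴ * Y := by
      ext ⟨k, s⟩ ⟨k', t⟩
      have hXg : (Xᴴ * X) (k, s) (k', t) = matToeplitz A (k.castSucc, s) (k'.castSucc, t) := by
        rw [hT, Matrix.mul_apply, Matrix.mul_apply]; rfl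
      have hYg : (Yᴴ * Y) (k, s) (k', t) = matToeplitz A (k.succ, s) (k'.succ, t) := by
        rw [hT, Matrix.mul_apply, Matrix.mul_apply]; rfl
      rw [hXg, hYg, matToeplitz_shift]
    obtain ⟨U, hU1, hUXY⟩ := exists_unitary_mul_eq f hf X Y hXYgram
    have hstep : ∀ k : Fin d, U * Bc k.castSucc = Bc k.succ := by
      intro k
      ext r t
      have h1 : (U * Bc k.castSucc) r t = (U * X) r (k, t) := by
        rw [Matrix.mul_apply, Matrix.mul_apply]
        rfl
      rw [h1, hUXY]
      rfl
    have hpow : ∀ (m : ℕ) (hm : m < d+1), Bc ⟨m, hm⟩ = U ^ m * Bc 0 := by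
      intro m
      induction m with
      | zero =>
        intro hm
        have h0 : (⟨0, hm⟩ : Fin (d+1)) = 0 := by ext; simp
        rw [pow_zero, Matrix.one_mul, h0]
      | succ m ih =>
        intro hm
        have hm' : m < d := by omega
        have h1 : (⟨m+1, hm⟩ : Fin (d+1)) = (⟨m, hm'⟩ : Fin d).succ := rfl
        have h2 : ((⟨m, hm'⟩ : Fin d).castSucc : Fin (d+1)) = ⟨m, by omega⟩ := rfl
        rw [h1, ← hstep ⟨m, hm'⟩, h2, ih (by omega), pow_succ', Matrix.mul_assoc]
    have h00 : (Bc 0)ᴴ * Bc 0 = 1 := by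
      ext s t
      rw [hBcmul, matToeplitz_diag]
    have hAk : ∀ k : Fin d, A k = (Bc 0)ᴴ * ((Uᴴ) ^ ((k : ℕ) + 1)) * Bc 0 := by
      intro k
      have h1 : A k = (Bc k.succ)ᴴ * Bc 0 := by
        ext s t
        rw [hBcmul, matToeplitz_lower]
      have h2 : (k.succ : Fin (d+1)) = ⟨(k : ℕ) + 1, by omega⟩ := rfl
      rw [h1, h2, hpow ((k : ℕ) + 1) (by omega), conjTranspose_mul,
        Matrix.conjTranspose_pow, Matrix.mul_assoc]
    -- diagonalize Uᴴ
    have hUH : (Uᴴ)ᴴ * (Uᴴ) = 1 := by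
      rw [conjTranspose_conjTranspose]
      exact mul_eq_one_comm.mp hU1
    obtain ⟨P, lam, hP1, hP2, hlnorm, hUHeq⟩ := unitary_diag Uᴴ hUH
    have hconjP : ∀ D1 D2 : Matrix (Fin (d+1) × Fin n) (Fin (d+1) × Fin n) ℂ,
        (P * D1 * Pᴴ) * (P * D2 * Pᴴ) = P * (D1 * D2) * Pᴴ := by
      intro D1 D2
      simp only [Matrix.mul_assoc]
      rw [show Pᴴ * (P * (D2 * Pᴴ)) = D2 * Pᴴ from by
        rw [← Matrix.mul_assoc, hP1, Matrix.one_mul]]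
    have hUHpow : ∀ m : ℕ, (Uᴴ) ^ m = P * Matrix.diagonal (fun j => lam j ^ m) * Pᴴ := by
      intro m
      induction m with
      | zero =>
        rw [pow_zero]
        have h1 : (fun j : Fin (d+1) × Fin n => lam j ^ 0) = fun _ => (1:ℂ) := by
          funext j; rw [pow_zero]
        rw [h1, Matrix.diagonal_one, Matrix.mul_one, hP2]
      | succ m ih =>
        rw [pow_succ, ih, hUHeq, hconjP, Matrix.diagonal_mul_diagonal]
        have h1 : (fun j : Fin (d+1) × Fin n => lam j ^ m * lam j)
            = fun j => lam j ^ (m + 1) := by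
          funext j; rw [pow_succ]
        rw [h1]
    set M : Matrix (Fin (d+1) × Fin n) (Fin n) ℂ := Pᴴ * Bc 0 with hMdef
    have hMM : Mᴴ * M = 1 := by
      rw [hMdef, conjTranspose_mul, conjTranspose_conjTranspose, Matrix.mul_assoc,
        ← Matrix.mul_assoc P, hP2, Matrix.one_mul, h00]
    have hAk2 : ∀ k : Fin d,
        A k = Mᴴ * Matrix.diagonal (fun j => lam j ^ ((k : ℕ) + 1)) * M := by
      intro k
      rw [hAk k, hUHpow, hMdef, conjTranspose_mul, conjTranspose_conjTranspose]
      simp only [Matrix.mul_assoc]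
    -- transfer to Fin ℓ
    set q : Fin (Fintype.card (Fin (d+1) × Fin n)) ≃ (Fin (d+1) × Fin n) :=
      (Fintype.equivFin (Fin (d+1) × Fin n)).symm with hqdef
    refine ⟨Fintype.card (Fin (d+1) × Fin n), fun j => lam (q j),
      fun j => Matrix.of fun s t => (starRingEnd ℂ) (M (q j) s) * M (q j) t,
      fun j => hlnorm (q j), ?_, ?_, ?_⟩
    · intro j
      have hform : (Matrix.of fun s t => (starRingEnd ℂ) (M (q j) s) * M (q j) t)
          = (Matrix.of fun (_ : Fin 1) t => M (q j) t)ᴴ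
            * (Matrix.of fun (_ : Fin 1) t => M (q j) t) := by
        ext s t
        rw [Matrix.mul_apply]
        simp [Matrix.conjTranspose_apply]
      dsimp only
      rw [hform]
      exact Matrix.posSemidef_conjTranspose_mul_self _
    · ext s t
      rw [Matrix.sum_apply]
      simp only [Matrix.of_apply]
      rw [← hMM, Matrix.mul_apply]
      rw [← Equiv.sum_comp q (fun r => (Mᴴ) s r * M r t)]
      rfl
    · intro k
      ext s t
      rw [hAk2 k, Matrix.sum_apply, Matrix.mul_apply]
      rw [← Equiv.sum_comp q
        (fun r => (Mᴴ * Matrix.diagonal fun j => lam j ^ ((k:ℕ)+1)) s r * M r t)]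
      refine Finset.sum_congr rfl (fun j _ => ?_)
      have h3 : (Mᴴ * Matrix.diagonal fun j => lam j ^ ((k:ℕ)+1)) s (q j)
          = (starRingEnd ℂ) (M (q j) s) * lam (q j) ^ ((k:ℕ)+1) := by
        rw [Matrix.mul_apply]
        rw [Finset.sum_eq_single (q j)]
        · rw [Matrix.diagonal_apply_eq, Matrix.conjTranspose_apply]
          rfl
        · intro r _ hr
          rw [Matrix.diagonal_apply_ne _ hr, mul_zero]
        · intro hmem
          exact absurd (Finset.mem_univ _) hmem
      rw [h3]
      simp only [Matrix.smul_apply, Matrix.of_apply, smul_eq_mul]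
      ring
  · -- easy direction
    rintro ⟨ℓ, lam, Q, hnorm, hpsd, hsum, hrep⟩
    have hunit : ∀ j, lam j * (starRingEnd ℂ) (lam j) = 1 := by
      intro j
      rw [Complex.mul_conj]
      norm_cast
      rw [Complex.normSq_eq_norm_sq, hnorm j, one_pow]
    have hunit' : ∀ j, (starRingEnd ℂ) (lam j) * lam j = 1 := by
      intro j
      rw [mul_comm]
      exact hunit j
    have hpq : ∀ (j : Fin ℓ) (p' q' : ℕ), q' ≤ p' →
        lam j ^ p' * (starRingEnd ℂ) (lam j) ^ q' = lam j ^ (p' - q') := by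
      intro j p' q' hle
      calc lam j ^ p' * (starRingEnd ℂ) (lam j) ^ q'
          = lam j ^ (p' - q') * ((lam j * (starRingEnd ℂ) (lam j)) ^ q') := by
            rw [mul_pow, ← mul_assoc, ← pow_add, Nat.sub_add_cancel hle]
        _ = lam j ^ (p' - q') := by rw [hunit, one_pow, mul_one]
    have hpq' : ∀ (j : Fin ℓ) (p' q' : ℕ), p' ≤ q' →
        lam j ^ p' * (starRingEnd ℂ) (lam j) ^ q' = (starRingEnd ℂ) (lam j) ^ (q' - p') := by
      intro j p' q' hle
      calc lam j ^ p' * (starRingEnd ℂ) (lam j) ^ q'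
          = ((lam j * (starRingEnd ℂ) (lam j)) ^ p') * (starRingEnd ℂ) (lam j) ^ (q' - p') := by
            rw [mul_pow, mul_assoc, ← pow_add, Nat.add_sub_cancel' hle]
        _ = (starRingEnd ℂ) (lam j) ^ (q' - p') := by rw [hunit, one_pow, one_mul]
    have hherm : ∀ j (s t : Fin n), (starRingEnd ℂ) (Q j t s) = Q j s t := by
      intro j s t
      have h1 := (hpsd j).1
      conv_rhs => rw [← h1]
      rfl
    choose R hR using fun j => psd_eq_ct_mul_self_aux (hpsd j)
    set W : Matrix (Fin ℓ × Fin n) (Fin (d+1) × Fin n) ℂ :=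
      Matrix.of fun ju pt => (starRingEnd ℂ) (lam ju.1 ^ (pt.1 : ℕ)) * R ju.1 ju.2 pt.2
      with hWdef
    have hWform : matToeplitz A = Wᴴ * W := by
      ext ⟨p, s⟩ ⟨qq, t⟩
      have hRHS : (Wᴴ * W) (p, s) (qq, t)
          = ∑ j : Fin ℓ, lam j ^ (p : ℕ) * (starRingEnd ℂ) (lam j) ^ (qq : ℕ) * Q j s t := by
        rw [Matrix.mul_apply, Fintype.sum_prod_type]
        refine Finset.sum_congr rfl (fun j _ => ?_)
        rw [hR j, Matrix.mul_apply, Finset.mul_sum]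
        refine Finset.sum_congr rfl (fun u _ => ?_)
        simp only [Matrix.conjTranspose_apply, hWdef, Matrix.of_apply, star_mul', star_pow,
          map_pow, Complex.star_def, Complex.conj_conj]
        ring
      rw [hRHS]
      simp only [matToeplitz, Matrix.of_apply]
      by_cases h1 : (p : ℕ) = (qq : ℕ)
      · rw [dif_pos h1]
        have h2 : ∑ j : Fin ℓ, lam j ^ (p : ℕ) * (starRingEnd ℂ) (lam j) ^ (qq : ℕ) * Q j s t
            = ∑ j, Q j s t := by
          refine Finset.sum_congr rfl (fun j _ => ?_)
          rw [← h1, hpq j _ _ le_rfl, Nat.sub_self, pow_zero, one_mul]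
        have h3 : ∑ j, Q j s t = (1 : Matrix (Fin n) (Fin n) ℂ) s t := by
          rw [← hsum, Matrix.sum_apply]
        rw [h2, h3]
      · rw [dif_neg h1]
        by_cases h2 : (qq : ℕ) < (p : ℕ)
        · rw [dif_pos h2]
          set k : Fin d := ⟨(p:ℕ) - (qq:ℕ) - 1, by have := p.isLt; omega⟩ with hkdef
          have hk1 : (p : ℕ) - (qq : ℕ) = (k : ℕ) + 1 := by
            rw [hkdef]; simp only; omega
          have h4 : ∑ j : Fin ℓ, lam j ^ (p : ℕ) * (starRingEnd ℂ) (lam j) ^ (qq : ℕ) * Q j s t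
              = ∑ j, lam j ^ ((k:ℕ)+1) * Q j s t := by
            refine Finset.sum_congr rfl (fun j _ => ?_)
            rw [hpq j _ _ (le_of_lt h2), hk1]
          rw [h4, hrep k, Matrix.sum_apply]
          refine Finset.sum_congr rfl (fun j _ => ?_)
          rw [Matrix.smul_apply, smul_eq_mul]
        · rw [dif_neg h2]
          have h2' : (p : ℕ) < (qq : ℕ) := by omega
          set k : Fin d := ⟨(qq:ℕ) - (p:ℕ) - 1, by have := qq.isLt; omega⟩ with hkdef
          have hk1 : (qq : ℕ) - (p : ℕ) = (k : ℕ) + 1 := by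
            rw [hkdef]; simp only; omega
          have h4 : ∑ j : Fin ℓ, lam j ^ (p : ℕ) * (starRingEnd ℂ) (lam j) ^ (qq : ℕ) * Q j s t
              = ∑ j, (starRingEnd ℂ) (lam j) ^ ((k:ℕ)+1) * Q j s t := by
            refine Finset.sum_congr rfl (fun j _ => ?_)
            rw [hpq' j _ _ (le_of_lt h2'), hk1]
          have h5 : (A k)ᴴ s t = (starRingEnd ℂ) (A k t s) := rfl
          rw [h4, h5, hrep k, Matrix.sum_apply, map_sum]
          refine Finset.sum_congr rfl (fun j _ => ?_)
          rw [Matrix.smul_apply, smul_eq_mul, _root_.map_mul, map_pow, hherm]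
    rw [MatToeplitzContractive, hWform]
    exact Matrix.posSemidef_conjTranspose_mul_self W
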